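/- For every real x < −4m², the boundary values of the imaginary part of F_a across the cut are lim_{ε→0⁺} Im(F_a(x + iε)) = π·√(1 + 4m²/x) and lim_{ε→0⁺} Im(F_a(x − iε)) = −π·√(1 + 4m²/x); since √(1 + 4m²/x) > 0 for x < −4m², the imaginary part of F_a is discontinuous across the half-line (−∞, −4m²). -/

import Mathlib

open MeasureTheory Complex Filter Set Asymptotics Topology ComplexConjugate
open scoped Real

/-- The half-line `(-∞, -4m²]` viewed as a subset of `ℂ`. -/
def cutSet (m : ℝ) : Set ℂ := {z : ℂ | z.im = 0 ∧ z.re ≤ -4 * m ^ 2}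

/-- The function `F_a(z) = ∫_{4m²}^∞ √(1 - 4m²/u) (1/(u+a) - 1/(u+z)) du`. -/
noncomputable def Fa (m a : ℝ) (z : ℂ) : ℂ :=
  ∫ u in Set.Ioi (4 * m ^ 2), (Real.sqrt (1 - 4 * m ^ 2 / u) : ℂ) *
    (1 / ((u : ℂ) + (a : ℂ)) - 1 / ((u : ℂ) + z))

/-!
For `ε > 0` the imaginary part of `F_a(x + iε)` is
`∫_{4m²}^∞ √(1 - 4m²/u) · ε / ((u + x)² + ε²) du`, the weight `√(1 - 4m²/u)` (extended by `0`)
convolved with the Poisson kernel at `-x`. After the substitution `u = -x + εt` this becomes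
`∫ √(1 - 4m²/(-x + εt)) / (1 + t²) dt`, and dominated convergence gives the limit
`π √(1 + 4m²/x)`, the weight being continuous at `-x > 4m²`. The limit from below follows from
`F_a(z̄) = conj F_a(z)`.
-/

lemma eventually_ofReal_add_ne_zero (w : ℂ) : ∀ᶠ u : ℝ in atTop, (u : ℂ) + w ≠ 0 := by
  filter_upwards [eventually_gt_atTop ‖w‖] with u hu h
  have : ‖(u : ℂ)‖ = ‖w‖ := by rw [eq_neg_of_add_eq_zero_left h, norm_neg]
  rw [norm_real, Real.norm_of_nonneg ((norm_nonneg w).trans hu.le)] at this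
  exact hu.ne' this

lemma isBigO_inv_ofReal_add (w : ℂ) :
    (fun u : ℝ => ((u : ℂ) + w)⁻¹) =O[atTop] fun u : ℝ => u ^ (-1 : ℝ) := by
  refine IsBigO.of_bound 2 ?_
  filter_upwards [eventually_ge_atTop (2 * ‖w‖ + 1)] with u hu
  have hu0 : 0 < u := by linarith [norm_nonneg w]
  have hnorm : u / 2 ≤ ‖(u : ℂ) + w‖ := by
    calc u / 2 ≤ ‖(u : ℂ)‖ - ‖-w‖ := by
          rw [norm_real, norm_neg, Real.norm_of_nonneg hu0.le]; linarith
      _ ≤ ‖(u : ℂ) + w‖ := by simpa using norm_sub_norm_le (u : ℂ) (-w)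
  rw [norm_inv, Real.rpow_neg_one, Real.norm_of_nonneg (inv_nonneg.2 hu0.le)]
  calc ‖(u : ℂ) + w‖⁻¹ ≤ (u / 2)⁻¹ := inv_anti₀ (by positivity) hnorm
    _ = 2 * u⁻¹ := by ring

lemma isBigO_inv_ofReal_add_sub_inv_ofReal_add (a z : ℂ) :
    (fun u : ℝ => ((u : ℂ) + a)⁻¹ - ((u : ℂ) + z)⁻¹) =O[atTop] fun u : ℝ => u ^ (-2 : ℝ) := by
  have hprod : (fun u : ℝ => ((u : ℂ) + a)⁻¹ - ((u : ℂ) + z)⁻¹)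
      =ᶠ[atTop] fun u => (z - a) * (((u : ℂ) + a)⁻¹ * ((u : ℂ) + z)⁻¹) := by
    filter_upwards [eventually_ofReal_add_ne_zero a, eventually_ofReal_add_ne_zero z]
      with u ha hz
    rw [inv_sub_inv ha hz, div_eq_mul_inv, mul_inv]
    ring
  have hpow : (fun u : ℝ => u ^ (-1 : ℝ) * u ^ (-1 : ℝ)) =ᶠ[atTop] fun u => u ^ (-2 : ℝ) := by
    filter_upwards [eventually_gt_atTop 0] with u hu
    rw [← Real.rpow_add hu]
    norm_num
  exact (((isBigO_inv_ofReal_add a).mul (isBigO_inv_ofReal_add z)).const_mul_left (z - a)).congr'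
    hprod.symm hpow

lemma integrableOn_inv_ofReal_add_sub_inv_ofReal_add {a z : ℂ} {b : ℝ}
    (ha : ∀ u : ℝ, b ≤ u → (u : ℂ) + a ≠ 0) (hz : ∀ u : ℝ, b ≤ u → (u : ℂ) + z ≠ 0) :
    IntegrableOn (fun u : ℝ => ((u : ℂ) + a)⁻¹ - ((u : ℂ) + z)⁻¹) (Ici b) := by
  have hcont : ContinuousOn (fun u : ℝ => ((u : ℂ) + a)⁻¹ - ((u : ℂ) + z)⁻¹) (Ici b) :=
    ((by fun_prop : ContinuousOn (fun u : ℝ => (u : ℂ) + a) (Ici b)).inv₀ ha).sub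
      ((by fun_prop : ContinuousOn (fun u : ℝ => (u : ℂ) + z) (Ici b)).inv₀ hz)
  exact (hcont.locallyIntegrableOn measurableSet_Ici).integrableOn_of_isBigO_atTop
    (isBigO_inv_ofReal_add_sub_inv_ofReal_add a z)
    (integrableAtFilter_rpow_atTop_iff.2 (by norm_num))

lemma sqrt_one_sub_div_le_one {b u : ℝ} (hb : 0 ≤ b) (hu : 0 ≤ u) : √(1 - b / u) ≤ 1 :=
  Real.sqrt_le_one.2 (by linarith [div_nonneg hb hu])

lemma integrableOn_Fa_integrand {a b : ℝ} {z : ℂ} (hb : 0 ≤ b) (ha : -b < a) (hz : z.im ≠ 0) :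
    IntegrableOn (fun u : ℝ => (√(1 - b / u) : ℂ) * (1 / ((u : ℂ) + a) - 1 / ((u : ℂ) + z)))
      (Ioi b) := by
  have ha' : ∀ u : ℝ, b ≤ u → (u : ℂ) + a ≠ 0 := fun u hu => by
    rw [← ofReal_add, ofReal_ne_zero]; linarith
  have hz' : ∀ u : ℝ, b ≤ u → (u : ℂ) + z ≠ 0 := fun u _ h => hz (by simpa using congrArg im h)
  simp_rw [one_div]
  refine ((integrableOn_inv_ofReal_add_sub_inv_ofReal_add ha' hz').mono_set
    Ioi_subset_Ici_self).bdd_mul (c := 1) (by fun_prop) ?_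
  filter_upwards [ae_restrict_mem measurableSet_Ioi] with u hu
  rw [norm_real, Real.norm_of_nonneg (Real.sqrt_nonneg _)]
  exact sqrt_one_sub_div_le_one hb (hb.trans (le_of_lt hu))

lemma im_one_div_ofReal_add_sub_one_div_ofReal_add (u a : ℝ) (z : ℂ) :
    (1 / ((u : ℂ) + a) - 1 / ((u : ℂ) + z)).im = z.im / ((u + z.re) ^ 2 + z.im ^ 2) := by
  simp [normSq_apply]
  ring

lemma im_Fa {m a : ℝ} {z : ℂ} (ha : -4 * m ^ 2 < a) (hz : z.im ≠ 0) :
    (Fa m a z).im = ∫ u in Ioi (4 * m ^ 2),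
      √(1 - 4 * m ^ 2 / u) * (z.im / ((u + z.re) ^ 2 + z.im ^ 2)) := by
  refine (integral_im (integrableOn_Fa_integrand (by positivity) (by linarith) hz)).symm.trans ?_
  simp_rw [RCLike.im_to_complex, im_ofReal_mul, im_one_div_ofReal_add_sub_one_div_ofReal_add]

lemma Fa_conj (m a : ℝ) (z : ℂ) : Fa m a (conj z) = conj (Fa m a z) := by
  simp only [Fa, ← integral_conj, map_mul, map_sub, map_div₀, map_one, map_add, conj_ofReal]

lemma integral_mul_poisson_eq_integral_inv_one_add_sq (g : ℝ → ℝ) (c : ℝ) {ε : ℝ} (hε : 0 < ε) :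
    ∫ u, g u * (ε / ((u - c) ^ 2 + ε ^ 2)) = ∫ t, g (c + ε * t) * (1 + t ^ 2)⁻¹ := by
  set G : ℝ → ℝ := fun u => g u * (ε / ((u - c) ^ 2 + ε ^ 2))
  have hscale : ∫ u, G u = ε * ∫ t, G (c + ε * t) := by
    rw [Measure.integral_comp_mul_left (fun y => G (c + y)), integral_add_left_eq_self,
      abs_of_pos (inv_pos.2 hε), smul_eq_mul, mul_inv_cancel_left₀ hε.ne']
  rw [hscale, ← integral_const_mul]
  congr with t
  simp only [G, add_sub_cancel_left]
  field_simp
  ring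

lemma tendsto_integral_mul_poisson {g : ℝ → ℝ} {c C : ℝ} (hg : Measurable g)
    (hbdd : ∀ u, ‖g u‖ ≤ C) (hc : ContinuousAt g c) :
    Tendsto (fun ε => ∫ u, g u * (ε / ((u - c) ^ 2 + ε ^ 2))) (𝓝[>] 0) (𝓝 (π * g c)) := by
  have hshift : ∀ t, Tendsto (fun ε : ℝ => c + ε * t) (𝓝[>] 0) (𝓝 c) := fun t =>
    ((by fun_prop : Continuous fun ε : ℝ => c + ε * t).tendsto' 0 c (by simp)).mono_left
      nhdsWithin_le_nhds
  have hlim : Tendsto (fun ε => ∫ t, g (c + ε * t) * (1 + t ^ 2)⁻¹) (𝓝[>] 0)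
      (𝓝 (∫ t, g c * (1 + t ^ 2)⁻¹)) := by
    refine tendsto_integral_filter_of_dominated_convergence (fun t => C * (1 + t ^ 2)⁻¹)
      (Eventually.of_forall fun ε =>
        ((hg.comp (by fun_prop)).mul (by fun_prop)).aestronglyMeasurable)
      (Eventually.of_forall fun ε => Eventually.of_forall fun t => ?_)
      (integrable_inv_one_add_sq.const_mul C)
      (Eventually.of_forall fun t => (hc.tendsto.comp (hshift t)).mul_const _)
    rw [norm_mul, Real.norm_of_nonneg (by positivity : (0 : ℝ) ≤ (1 + t ^ 2)⁻¹)]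
    exact mul_le_mul_of_nonneg_right (hbdd _) (by positivity)
  rw [integral_const_mul, integral_univ_inv_one_add_sq, mul_comm] at hlim
  exact hlim.congr' (eventually_nhdsWithin_of_forall fun ε hε =>
    (integral_mul_poisson_eq_integral_inv_one_add_sq g c hε).symm)

lemma tendsto_setIntegral_sqrt_mul_poisson {b c : ℝ} (hb : 0 ≤ b) (hc : b < c) :
    Tendsto (fun ε => ∫ u in Ioi b, √(1 - b / u) * (ε / ((u - c) ^ 2 + ε ^ 2))) (𝓝[>] 0)
      (𝓝 (π * √(1 - b / c))) := by
  set g : ℝ → ℝ := (Ioi b).indicator fun u => √(1 - b / u)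
  have hbdd : ∀ u, ‖g u‖ ≤ 1 := fun u => by
    simp only [g]
    by_cases hu : u ∈ Ioi b
    · rw [indicator_of_mem hu, Real.norm_of_nonneg (Real.sqrt_nonneg _)]
      exact sqrt_one_sub_div_le_one hb (hb.trans (le_of_lt hu))
    · simp [indicator_of_notMem hu]
  have hcont : ContinuousAt g c := by
    refine (continuousAt_congr (eqOn_indicator.eventuallyEq_of_mem (Ioi_mem_nhds hc))).2 ?_
    exact (continuousAt_const.sub (continuousAt_const.div continuousAt_id
      (hb.trans_lt hc).ne')).sqrt
  have hlim := tendsto_integral_mul_poisson (by measurability) hbdd hcont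
  rw [show g c = √(1 - b / c) from indicator_of_mem (mem_Ioi.2 hc) _] at hlim
  simp_rw [← integral_indicator measurableSet_Ioi, indicator_mul_left]
  exact hlim

theorem stmt_13_general (m a : ℝ) (ha : -4 * m ^ 2 < a) :
    ∀ x : ℝ, x < -4 * m ^ 2 →
      Filter.Tendsto (fun ε : ℝ => (Fa m a ((x : ℂ) + (ε : ℂ) * Complex.I)).im)
        (nhdsWithin 0 (Set.Ioi 0)) (nhds (Real.pi * Real.sqrt (1 + 4 * m ^ 2 / x))) ∧
      Filter.Tendsto (fun ε : ℝ => (Fa m a ((x : ℂ) - (ε : ℂ) * Complex.I)).im)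
        (nhdsWithin 0 (Set.Ioi 0)) (nhds (-(Real.pi * Real.sqrt (1 + 4 * m ^ 2 / x)))) ∧
      0 < Real.sqrt (1 + 4 * m ^ 2 / x) := by
  intro x hx
  have hx0 : x < 0 := by nlinarith
  have hweight : 1 - 4 * m ^ 2 / -x = 1 + 4 * m ^ 2 / x := by rw [div_neg, sub_neg_eq_add]
  have upper : Tendsto (fun ε : ℝ => (Fa m a ((x : ℂ) + (ε : ℂ) * I)).im) (𝓝[>] 0)
      (𝓝 (π * √(1 + 4 * m ^ 2 / x))) := by
    rw [← hweight]
    refine (tendsto_setIntegral_sqrt_mul_poisson (by positivity) (by linarith)).congr'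
      (eventually_nhdsWithin_of_forall fun ε hε => ?_)
    have hz : ((x : ℂ) + ε * I).im ≠ 0 := by simpa using (mem_Ioi.1 hε).ne'
    simp [im_Fa ha hz]
  refine ⟨upper, ?_, Real.sqrt_pos.2 ?_⟩
  · have hconj : ∀ ε : ℝ, (x : ℂ) - ε * I = conj ((x : ℂ) + ε * I) := fun ε => by
      simp [sub_eq_add_neg]
    simpa only [hconj, Fa_conj, conj_im] using upper.neg
  · rw [← hweight]
    have : 4 * m ^ 2 / -x < 1 := (div_lt_one (by linarith)).2 (by linarith)
    linarith

theorem stmt_13 (m a : ℝ) (hm : 0 < m) (ha : -4 * m ^ 2 < a) :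
    ∀ x : ℝ, x < -4 * m ^ 2 →
      Filter.Tendsto (fun ε : ℝ => (Fa m a ((x : ℂ) + (ε : ℂ) * Complex.I)).im)
        (nhdsWithin 0 (Set.Ioi 0)) (nhds (Real.pi * Real.sqrt (1 + 4 * m ^ 2 / x))) ∧
      Filter.Tendsto (fun ε : ℝ => (Fa m a ((x : ℂ) - (ε : ℂ) * Complex.I)).im)
        (nhdsWithin 0 (Set.Ioi 0)) (nhds (-(Real.pi * Real.sqrt (1 + 4 * m ^ 2 / x)))) ∧
      0 < Real.sqrt (1 + 4 * m ^ 2 / x) :=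
  stmt_13_general m a ha
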